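/- arXiv:math/0601289 — 4 statements merged into one kernel-verified Lean document; each statement's English description precedes it below -/
import Mathlib

section
/- For 0 ≤ b < 1/4, the values v1D = (1/2)b² + 7/16, v1E = (3/4)b² - (1/4)b + 1/2 and v1C = b² - (1/2)b + 9/16 satisfy the strict chain v1D < v1E < v1C. -/
/-- Strict ordering of the values to Player 1 at vertices D, E, C. -/
theorem stmt_3 (b : ℝ) (hb0 : 0 ≤ b) (hb1 : b < 1/4) :
    (1/2)*b^2 + 7/16 < (3/4)*b^2 - (1/4)*b + 1/2 ∧
    (3/4)*b^2 - (1/4)*b + 1/2 < b^2 - (1/2)*b + 9/16 := by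
  constructor <;> nlinarith [sq_nonneg (b - 1/2), sq_nonneg b]
end

section
/- For 0 ≤ b < 1/4 and d ≤ b ≤ 1/4: v1F + v2F = 2v1F < v1C + v2C, where v1F = v1E + ∫_b^{1/2}(x-1/2)(d-x/2-1/4)/(4d-3x-1/2)dx, v1E = (3/4)b² - b/4 + 1/2, v1C + v2C = (3/2)b² - b/2 + 1. -/
/-- The utilitarian sum at vertex F is strictly less than the utilitarian sum at C. -/
theorem stmt_10 (b d : ℝ) (hb0 : 0 ≤ b) (hb1 : b < 1/4) (hd : d ≤ b) :
    2*(((3/4)*b^2 - b/4 + 1/2)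
        + (∫ x in b..(1/2 : ℝ), (x - 1/2)*(d - x/2 - 1/4)/(4*d - 3*x - 1/2)))
      < (3/2)*b^2 - b/2 + 1 := by
  set f : ℝ → ℝ := fun x => (x - 1/2)*(d - x/2 - 1/4)/(4*d - 3*x - 1/2) with hf
  have hden : ∀ x ∈ Set.uIcc b (1/2 : ℝ), 4*d - 3*x - 1/2 ≠ 0 := by
    intro x hx
    rw [Set.uIcc_of_le (by linarith)] at hx
    have : 4*d - 3*x - 1/2 < 0 := by linarith [hx.1]
    exact ne_of_lt this
  have hcont : ContinuousOn f (Set.uIcc b (1/2 : ℝ)) := by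
    apply ContinuousOn.div
    · fun_prop
    · fun_prop
    · exact hden
  have hint : IntervalIntegrable f MeasureTheory.volume b (1/2) :=
    hcont.intervalIntegrable
  have hpos : ∀ x ∈ Set.Ioo b (1/2:ℝ), 0 < -f x := by
    intro x hx
    have h1 : x - 1/2 < 0 := by linarith [hx.2]
    have h2 : d - x/2 - 1/4 < 0 := by linarith [hx.1]
    have h3 : 4*d - 3*x - 1/2 < 0 := by linarith [hx.1]
    have hnum : 0 < (x - 1/2)*(d - x/2 - 1/4) := mul_pos_of_neg_of_neg h1 h2
    have : f x < 0 := div_neg_of_pos_of_neg hnum h3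
    linarith
  have hI : (∫ x in b..(1/2:ℝ), f x) < 0 := by
    have := intervalIntegral.intervalIntegral_pos_of_pos_on hint.neg hpos (by linarith)
    simp only [Pi.neg_apply, intervalIntegral.integral_neg] at this
    linarith
  nlinarith [hI]
end

section
/- Suppose 0 ≤ w < k ≤ u ≤ 1 and define W = ∫₀^w w dx + ∫_w^u x dx + (1/2)∫_u^1 (x+u) dx and K ≥ ∫₀^k k dx + ∫_k^u g(x) dx + (1/2)∫_u^1 (x+u) dx where g(x) ≥ x for all x ∈ [k,u] and g is integrable. Then K - W ≥ (k² - w²)/2 > 0. -/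
/-- Key recursion inequality in the proof that the libertarian equilibria minimise
the minimum value among utilitarian equilibria. -/
theorem stmt_16 (w k u K : ℝ) (g : ℝ → ℝ)
    (hw : 0 ≤ w) (hwk : w < k) (hku : k ≤ u) (hu : u ≤ 1)
    (hg : ∀ x ∈ Set.Icc k u, x ≤ g x)
    (hgint : IntervalIntegrable g MeasureTheory.volume k u)
    (hK : (∫ _x in (0:ℝ)..k, k) + (∫ x in k..u, g x)
            + (1/2) * (∫ x in u..(1:ℝ), (x + u)) ≤ K) :
    (k^2 - w^2)/2
      ≤ K - ((∫ _x in (0:ℝ)..w, w) + (∫ x in w..u, x)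
              + (1/2) * (∫ x in u..(1:ℝ), (x + u))) ∧
    0 < (k^2 - w^2)/2 := by
  have hgl : (∫ x in k..u, x) ≤ ∫ x in k..u, g x := by
    apply intervalIntegral.integral_mono_on hku _ hgint
    · intro x hx
      exact hg x ⟨hx.1, hx.2⟩
    · exact intervalIntegral.intervalIntegrable_id
  simp only [intervalIntegral.integral_const,
    integral_id, smul_eq_mul] at *
  constructor
  · nlinarith [hgl, hK]
  · nlinarith [hwk, hw]
end

section
/- For 0 ≤ b < 1/4, min{v1C, v2C} = v2C = b²/2 + 7/16 < v1E = (3/4)b² - b/4 + 1/2, i.e., the minimum value at vertex C is strictly less than the common value at vertex E. -/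
/-- The minimum value at vertex C is v2C, and it is strictly less than the common
value at the symmetric vertex E. -/
theorem stmt_18 (b : ℝ) (hb0 : 0 ≤ b) (hb1 : b < 1/4) :
    min (b^2 - b/2 + 9/16) (b^2/2 + 7/16) = b^2/2 + 7/16 ∧
    b^2/2 + 7/16 < (3/4)*b^2 - b/4 + 1/2 := by
  constructor
  · rw [min_eq_right]
    nlinarith [sq_nonneg (b - 1/2)]
  · nlinarith [sq_nonneg (b - 1/2)]
end
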